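/- arXiv:2203.09912 — 3 statements merged into one kernel-verified Lean document; each statement's English description precedes it below -/
import Mathlib

section
/- Let S_2(ℤ) be the ring of matrices [[a,b],[0,a]] with a,b ∈ ℤ, and let σ₃ : S_2(ℤ) → S_2(ℤ) be the ring endomorphism sending [[a,b],[0,a]] to [[a,0],[0,a]]. Then S_2(ℤ) is weak σ₃-compatible (i.e., for all A, B ∈ S_2(ℤ), A·σ₃(B) is nilpotent if and only if A·B is nilpotent), but S_2(ℤ) is not σ₃-compatible: there exist C, D ∈ S_2(ℤ) with C·σ₃(D) = 0 and C·D ≠ 0. -/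
open TrivSqZeroExt

/-- The endomorphism `σ₃` of `S₂(ℤ) = TrivSqZeroExt ℤ ℤ` sending `[[a,b],[0,a]]` to
`[[a,0],[0,a]]`. -/
def sigma3 : TrivSqZeroExt ℤ ℤ →+* TrivSqZeroExt ℤ ℤ where
  toFun x := inl x.fst
  map_one' := by simp
  map_mul' x y := by simp [fst_mul, inl_mul]
  map_zero' := by simp
  map_add' x y := by simp [fst_add, inl_add]

theorem fst_sigma3 (x : TrivSqZeroExt ℤ ℤ) : (sigma3 x).fst = x.fst := rfl

theorem sigma3_inr (m : ℤ) : sigma3 (inr m) = 0 := by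
  ext <;> rfl

/-- `S₂(ℤ)` is weak `σ₃`-compatible but not `σ₃`-compatible. -/
theorem S2Z_weak_compatible_not_compatible :
    (∀ A B : TrivSqZeroExt ℤ ℤ, IsNilpotent (A * sigma3 B) ↔ IsNilpotent (A * B)) ∧
    (∃ C D : TrivSqZeroExt ℤ ℤ, C * sigma3 D = 0 ∧ C * D ≠ 0) := by
  refine ⟨fun A B => ?_, ⟨1, inr 1, ?_, ?_⟩⟩
  · simp only [isNilpotent_iff_isNilpotent_fst, fst_mul, fst_sigma3]
  · rw [sigma3_inr, mul_zero]
  · rw [one_mul, Ne, ← inr_zero, inr_injective.eq_iff]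
    exact one_ne_zero
end

section
/- Let R be a ring with an endomorphism σ and a σ-derivation δ such that R is (σ,δ)-compatible. If a, b ∈ R satisfy ab = 0, then a·σ(b) = 0, σ(a)·b = 0, σ(a)·δ(b) = 0, and δ(a)·σ(b) = 0. -/
/-- If `R` is `(σ,δ)`-compatible (where `σ` is an endomorphism and `δ` a
`σ`-derivation) and `a * b = 0`, then `a * σ b = 0`, `σ a * b = 0`, `σ a * δ b = 0`,
and `δ a * σ b = 0`. -/
theorem sigma_delta_compatible_of_mul_eq_zero {R : Type*} [Ring R]
    (σ : R →+* R) (δ : R → R)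
    (hδadd : ∀ r s : R, δ (r + s) = δ r + δ s)
    (hδleibniz : ∀ r s : R, δ (r * s) = σ r * δ s + δ r * s)
    (hσcompat : ∀ a b : R, a * b = 0 ↔ a * σ b = 0)
    (hδcompat : ∀ a b : R, a * b = 0 → a * δ b = 0)
    (a b : R) (hab : a * b = 0) :
    a * σ b = 0 ∧ σ a * b = 0 ∧ σ a * δ b = 0 ∧ δ a * σ b = 0 := by
  have hδ0 : δ 0 = 0 := by
    simpa using hδadd 0 0
  have h1 : a * σ b = 0 := (hσcompat a b).mp hab
  have h2 : σ a * b = 0 := by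
    have : σ a * σ b = 0 := by rw [← map_mul, hab, map_zero]
    exact (hσcompat (σ a) b).mpr this
  have h3 : σ a * δ b = 0 := hδcompat _ _ h2
  have h4 : δ a * b = 0 := by
    have := hδleibniz a b
    rw [hab, hδ0, h3, zero_add] at this
    exact this.symm
  have h5 : δ a * σ b = 0 := (hσcompat _ _).mp h4
  exact ⟨h1, h2, h3, h5⟩
end

section
/- Let R be a ring in which N(R) is an ideal (an NI ring), and suppose R is weak σ-compatible for an endomorphism σ and weak δ-compatible for a σ-derivation δ. If a, b ∈ R satisfy ab ∈ N(R), then σ(a)·δ(b) ∈ N(R) and δ(a)·σ(b) ∈ N(R). -/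
lemma nilp_swap {R : Type*} [Ring R] {a b : R} (h : IsNilpotent (a * b)) :
    IsNilpotent (b * a) := by
  obtain ⟨n, hn⟩ := h
  refine ⟨n + 1, ?_⟩
  have key : ∀ m : ℕ, (b * a) ^ (m + 1) = b * (a * b) ^ m * a := by
    intro m
    induction m with
    | zero => simp
    | succ k ih =>
      rw [pow_succ, ih, pow_succ]
      noncomm_ring
  rw [key, hn, mul_zero, zero_mul]

/-- Let `R` be an NI ring (the nilpotent elements form a two-sided ideal) which is weak
`σ`-compatible and weak `δ`-compatible. If `a * b` is nilpotent, then so are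
`σ a * δ b` and `δ a * σ b`. -/
theorem weak_compatible_nilpotent {R : Type*} [Ring R]
    (hNI : ∃ I : TwoSidedIdeal R, ∀ x : R, x ∈ I ↔ IsNilpotent x)
    (σ : R →+* R) (δ : R → R)
    (hδadd : ∀ r s : R, δ (r + s) = δ r + δ s)
    (hδleibniz : ∀ r s : R, δ (r * s) = σ r * δ s + δ r * s)
    (hσcompat : ∀ a b : R, IsNilpotent (a * b) ↔ IsNilpotent (a * σ b))
    (hδcompat : ∀ a b : R, IsNilpotent (a * b) → IsNilpotent (a * δ b))
    (a b : R) (hab : IsNilpotent (a * b)) :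
    IsNilpotent (σ a * δ b) ∧ IsNilpotent (δ a * σ b) := by
  obtain ⟨I, hI⟩ := hNI
  -- b * a nilpotent, hence b * σ a nilpotent, hence σ a * b nilpotent
  have hba : IsNilpotent (b * a) := nilp_swap hab
  have hbsa : IsNilpotent (b * σ a) := (hσcompat b a).mp hba
  have hsab : IsNilpotent (σ a * b) := nilp_swap hbsa
  -- first conclusion
  have h1 : IsNilpotent (σ a * δ b) := hδcompat (σ a) b hsab
  refine ⟨h1, ?_⟩
  -- δ (a*b) nilpotent: 1 * (a*b) nilpotent ⇒ 1 * δ(a*b) nilpotent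
  have hd : IsNilpotent (δ (a * b)) := by
    have := hδcompat 1 (a * b) (by simpa using hab)
    simpa using this
  rw [hδleibniz] at hd
  -- δ a * b nilpotent via ideal
  have hdab : IsNilpotent (δ a * b) := by
    have h3 : σ a * δ b + δ a * b ∈ I := (hI _).mpr hd
    have h4 : σ a * δ b ∈ I := (hI _).mpr h1
    have h5 : δ a * b ∈ I := by
      have := I.sub_mem h3 h4
      simpa using this
    exact (hI _).mp h5
  exact (hσcompat (δ a) b).mp hdab
end
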